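/- arXiv:2111.14758 — 5 statements merged into one kernel-verified Lean document; each statement's English description precedes it below -/
import Mathlib

section
/- Let H = D + E + Eᵀ be positive semidefinite with positive definite block-diagonal part D (2×2 block structure). Then every eigenvalue μ of the block Jacobi iteration matrix I − D^{-1}H is real and satisfies |μ| ≤ 1. -/
open Matrix

lemma real_dot {n : Type*} [Fintype n] (M : Matrix n n ℝ) (u v : n → ℝ) :
    (fun i => (u i : ℂ)) ⬝ᵥ (M.map Complex.ofReal *ᵥ fun i => (v i : ℂ)) =
      ((u ⬝ᵥ M *ᵥ v : ℝ) : ℂ) := by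
  rw [show ((u ⬝ᵥ M *ᵥ v : ℝ) : ℂ) = Complex.ofRealHom (u ⬝ᵥ M *ᵥ v) from rfl,
    RingHom.map_dotProduct Complex.ofRealHom]
  congr 1
  funext i
  exact (RingHom.map_mulVec Complex.ofRealHom M v i).symm

lemma quad_eq {n : Type*} [Fintype n] (M : Matrix n n ℝ) (hM : Mᵀ = M) (x : n → ℂ) :
    star x ⬝ᵥ (M.map Complex.ofReal *ᵥ x) =
      (((fun i => (x i).re) ⬝ᵥ M *ᵥ (fun i => (x i).re)
        + (fun i => (x i).im) ⬝ᵥ M *ᵥ (fun i => (x i).im) : ℝ) : ℂ) := by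
  set u : n → ℝ := fun i => (x i).re with hu
  set v : n → ℝ := fun i => (x i).im with hv
  have hsymm : ∀ a b : n → ℝ, a ⬝ᵥ M *ᵥ b = b ⬝ᵥ M *ᵥ a := by
    intro a b
    conv_lhs => rw [dotProduct_mulVec, ← hM, vecMul_transpose]
    exact dotProduct_comm _ _
  have hx : x = (fun i => (u i : ℂ)) + (Complex.I • fun i => (v i : ℂ)) := by
    funext i
    simp [hu, hv, Complex.ext_iff]
  have hsx : star x = (fun i => (u i : ℂ)) - (Complex.I • fun i => (v i : ℂ)) := by
    funext i
    simp [hu, hv, Complex.ext_iff]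
  rw [hsx]
  nth_rewrite 1 [hx]
  simp only [mulVec_add, mulVec_smul, dotProduct_add, dotProduct_smul,
    sub_dotProduct, smul_dotProduct, smul_eq_mul, real_dot]
  rw [hsymm v u]
  push_cast
  ring_nf
  rw [Complex.I_sq]
  ring

/-- If `H = D + E + Eᵀ` (2×2 block structure) is positive semidefinite with
positive definite block diagonal `D`, then every eigenvalue `μ` of the block Jacobi
iteration matrix `I - D⁻¹H` is real and satisfies `|μ| ≤ 1`. -/
theorem stmt_1 (p₁ p₂ : ℕ)
    (D₁ : Matrix (Fin p₁) (Fin p₁) ℝ) (D₂ : Matrix (Fin p₂) (Fin p₂) ℝ)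
    (E₂₁ : Matrix (Fin p₂) (Fin p₁) ℝ)
    (H D E : Matrix (Fin p₁ ⊕ Fin p₂) (Fin p₁ ⊕ Fin p₂) ℝ)
    (hD : D = Matrix.fromBlocks D₁ 0 0 D₂)
    (hE : E = Matrix.fromBlocks 0 0 E₂₁ 0)
    (hH : H = D + E + Eᵀ)
    (hHpsd : H.PosSemidef) (hDpd : D.PosDef)
    (μ : ℂ) (x : (Fin p₁ ⊕ Fin p₂) → ℂ) (hx : x ≠ 0)
    (heig : ((1 - D⁻¹ * H).map (Complex.ofReal)) *ᵥ x = μ • x) :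
    μ.im = 0 ∧ ‖μ‖ ≤ 1 := by
  -- K = D - E - Eᵀ is PSD, being S H S with S = diag(1, -1)
  set S : Matrix (Fin p₁ ⊕ Fin p₂) (Fin p₁ ⊕ Fin p₂) ℝ :=
    Matrix.fromBlocks 1 0 0 (-1) with hS
  have hKpsd : (D - E - Eᵀ).PosSemidef := by
    have h1 : (Sᴴ * H * S).PosSemidef := hHpsd.conjTranspose_mul_mul_same S
    have h2 : Sᴴ * H * S = D - E - Eᵀ := by
      have hEt : Eᵀ = Matrix.fromBlocks 0 E₂₁ᵀ 0 0 := by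
        rw [hE, fromBlocks_transpose]; simp
      have hScH : Sᴴ = S := by
        rw [hS, fromBlocks_conjTranspose]
        simp
      rw [hScH, hS, hH, hEt, hD, hE]
      simp [Matrix.fromBlocks_multiply, Matrix.fromBlocks_add, sub_eq_add_neg,
        Matrix.fromBlocks_neg]
    rw [← h2]; exact h1
  -- H x = (1-μ) D x  over ℂ
  have hdet : IsUnit D.det := isUnit_iff_ne_zero.mpr (ne_of_gt hDpd.det_pos)
  have hmap : ((1 - D⁻¹ * H).map (Complex.ofReal))
      = 1 - (D⁻¹.map Complex.ofReal) * (H.map Complex.ofReal) := by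
    have := map_sub (Complex.ofRealHom.mapMatrix :
        Matrix (Fin p₁ ⊕ Fin p₂) (Fin p₁ ⊕ Fin p₂) ℝ →+* _) 1 (D⁻¹ * H)
    simp [RingHom.mapMatrix_apply, _root_.map_mul, _root_.map_one] at this; exact this
  have hstep : ((D⁻¹.map Complex.ofReal) * (H.map Complex.ofReal)) *ᵥ x = (1 - μ) • x := by
    rw [hmap, sub_mulVec, one_mulVec] at heig
    rw [sub_smul, one_smul]
    linear_combination (norm := module) -heig
  have hDDinv : (D.map Complex.ofReal) * (D⁻¹.map Complex.ofReal) = 1 := by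
    have := congrArg (Complex.ofRealHom.mapMatrix) (Matrix.mul_nonsing_inv D hdet)
    simp [RingHom.mapMatrix_apply, _root_.map_mul, _root_.map_one] at this; exact this
  have key : (H.map Complex.ofReal) *ᵥ x = (1 - μ) • ((D.map Complex.ofReal) *ᵥ x) := by
    have h3 : (H.map Complex.ofReal) *ᵥ x
        = (D.map Complex.ofReal) *ᵥ (((D⁻¹.map Complex.ofReal) * (H.map Complex.ofReal)) *ᵥ x) := by
      rw [mulVec_mulVec, ← Matrix.mul_assoc, hDDinv, Matrix.one_mul]
    rw [h3, hstep, mulVec_smul]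
  -- quadratic forms
  set u : (Fin p₁ ⊕ Fin p₂) → ℝ := fun i => (x i).re with hu
  set v : (Fin p₁ ⊕ Fin p₂) → ℝ := fun i => (x i).im with hv
  set ar : ℝ := u ⬝ᵥ H *ᵥ u + v ⬝ᵥ H *ᵥ v with har
  set br : ℝ := u ⬝ᵥ D *ᵥ u + v ⬝ᵥ D *ᵥ v with hbr
  have hHsymm : Hᵀ = H := hHpsd.isHermitian
  have hDsymm : Dᵀ = D := hDpd.isHermitian
  have haq : star x ⬝ᵥ ((H.map Complex.ofReal) *ᵥ x) = (ar : ℂ) := quad_eq H hHsymm x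
  have hbq : star x ⬝ᵥ ((D.map Complex.ofReal) *ᵥ x) = (br : ℂ) := quad_eq D hDsymm x
  have hab : (ar : ℂ) = (1 - μ) * (br : ℂ) := by
    rw [← haq, ← hbq, key, dotProduct_smul, smul_eq_mul]
  have har0 : 0 ≤ ar := by
    have h1 := hHpsd.dotProduct_mulVec_nonneg u
    have h2 := hHpsd.dotProduct_mulVec_nonneg v
    simp only [star_trivial] at h1 h2
    positivity
  -- br > 0
  have hbr0 : 0 < br := by
    obtain ⟨i, hi⟩ := Function.ne_iff.mp hx
    have hdu := hDpd.posSemidef.dotProduct_mulVec_nonneg u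
    have hdv := hDpd.posSemidef.dotProduct_mulVec_nonneg v
    simp only [star_trivial] at hdu hdv
    rcases Classical.em (u = 0) with hu0 | hu0
    · have hv0 : v ≠ 0 := by
        intro hv0
        apply hi
        have : u i = 0 := by rw [hu0]; rfl
        have : v i = 0 := by rw [hv0]; rfl
        exact Complex.ext (by simpa [hu] using (show u i = 0 by rw [hu0]; rfl))
          (by simpa [hv] using this)
      have := hDpd.dotProduct_mulVec_pos hv0
      simp only [star_trivial] at this
      linarith
    · have := hDpd.dotProduct_mulVec_pos hu0
      simp only [star_trivial] at this
      linarith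
  -- ar ≤ 2 br
  have harle : ar ≤ 2 * br := by
    have h1 := hKpsd.dotProduct_mulVec_nonneg u
    have h2 := hKpsd.dotProduct_mulVec_nonneg v
    simp only [star_trivial] at h1 h2
    have e1 : ∀ w : (Fin p₁ ⊕ Fin p₂) → ℝ,
        w ⬝ᵥ (D - E - Eᵀ) *ᵥ w = 2 * (w ⬝ᵥ D *ᵥ w) - w ⬝ᵥ H *ᵥ w := by
      intro w
      rw [hH]
      simp only [sub_mulVec, add_mulVec, dotProduct_sub, dotProduct_add]
      ring
    rw [e1] at h1 h2
    simp only [har, hbr]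
    linarith
  -- conclude
  have hbrne : (br : ℂ) ≠ 0 := by exact_mod_cast ne_of_gt hbr0
  have hμ : μ = ((1 - ar / br : ℝ) : ℂ) := by
    have : (1 : ℂ) - μ = (ar : ℂ) / (br : ℂ) := by
      rw [eq_div_iff hbrne]
      linear_combination -hab
    push_cast
    linear_combination -this
  constructor
  · rw [hμ]; exact Complex.ofReal_im _
  · rw [hμ, Complex.norm_real, Real.norm_eq_abs]
    rw [abs_le]
    constructor
    · have : ar / br ≤ 2 := (div_le_iff₀ hbr0).mpr (by linarith)
      linarith
    · have : 0 ≤ ar / br := div_nonneg har0 (le_of_lt hbr0)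
      linarith
end

section
/- Let H ∈ ℝ^{p×p} be symmetric positive semidefinite with positive definite block diagonal D, E the strictly lower block-triangular part, and 0 < ω < 2. If x ∈ ker H satisfies N_ω x ∈ (ker H)^⊥, where N_ω = (1/ω)D + E, then x = 0. Consequently ℝ^p = ker H ⊕ N_ω^{-1}((ker H)^⊥) is a direct sum decomposition. -/
open Matrix

/-- For `H = D + E + Eᵀ` positive semidefinite with positive definite block
diagonal `D`, `0 < ω < 2` and `N_ω = (1/ω)D + E` invertible: any `x ∈ ker H` with
`N_ω x ∈ (ker H)ᗮ` must be zero, and consequently `ℝ^p = ker H ⊕ N_ω⁻¹((ker H)ᗮ)`. -/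
theorem stmt_3 (p₁ p₂ : ℕ)
    (D₁ : Matrix (Fin p₁) (Fin p₁) ℝ) (D₂ : Matrix (Fin p₂) (Fin p₂) ℝ)
    (E₂₁ : Matrix (Fin p₂) (Fin p₁) ℝ)
    (H D E Nω : Matrix (Fin p₁ ⊕ Fin p₂) (Fin p₁ ⊕ Fin p₂) ℝ)
    (hD : D = Matrix.fromBlocks D₁ 0 0 D₂)
    (hE : E = Matrix.fromBlocks 0 0 E₂₁ 0)
    (hH : H = D + E + Eᵀ)
    (hHpsd : H.PosSemidef) (hDpd : D.PosDef)
    (ω : ℝ) (hω : 0 < ω ∧ ω < 2)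
    (hN : Nω = (1 / ω) • D + E) (hNinv : IsUnit Nω)
    (K W : Submodule ℝ (EuclideanSpace ℝ (Fin p₁ ⊕ Fin p₂)))
    (hK : K = LinearMap.ker (Matrix.toEuclideanLin H))
    (hW : W = Submodule.comap (Matrix.toEuclideanLin Nω) Kᗮ) :
    (∀ x ∈ K, (Matrix.toEuclideanLin Nω) x ∈ Kᗮ → x = 0) ∧ IsCompl K W := by
  obtain ⟨hω0, hω2⟩ := hω
  -- Part 1
  have part1 : ∀ x ∈ K, (Matrix.toEuclideanLin Nω) x ∈ Kᗮ → x = 0 := by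
    intro x hx hNx
    by_contra hx0
    set v : (Fin p₁ ⊕ Fin p₂) → ℝ := (WithLp.equiv 2 _) x with hv
    have hv0 : v ≠ 0 := fun h => hx0 ((WithLp.equiv 2 _).injective (h.trans rfl))
    -- H *ᵥ v = 0
    have hHv : H *ᵥ v = 0 := by
      have := hK ▸ hx
      have h1 : Matrix.toEuclideanLin H x = 0 := LinearMap.mem_ker.mp this
      have := congrArg (WithLp.equiv 2 _) h1
      simpa [Matrix.toEuclideanLin_apply, hv] using this
    -- inner ⟨x, Nω x⟩ = 0
    have hinner : (inner ℝ x (Matrix.toEuclideanLin Nω x) : ℝ) = 0 := by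
      exact (Submodule.mem_orthogonal K _).mp hNx x hx
    have hdot : v ⬝ᵥ (Nω *ᵥ v) = 0 := by
      rw [← hinner, Matrix.toEuclideanLin_apply]
      simp [PiLp.inner_apply, dotProduct, hv, mul_comm]
    -- key algebra
    have hEsym : v ⬝ᵥ (Eᵀ *ᵥ v) = v ⬝ᵥ (E *ᵥ v) := by
      rw [Matrix.mulVec_transpose, dotProduct_comm, Matrix.dotProduct_mulVec]
    have hHdot : v ⬝ᵥ (H *ᵥ v) = 0 := by rw [hHv, dotProduct_zero]
    have hsum : v ⬝ᵥ (D *ᵥ v) + 2 * (v ⬝ᵥ (E *ᵥ v)) = 0 := by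
      have : v ⬝ᵥ ((D + E + Eᵀ) *ᵥ v) = 0 := by rw [← hH]; exact hHdot
      rw [Matrix.add_mulVec, Matrix.add_mulVec, dotProduct_add,
        dotProduct_add, hEsym] at this
      linarith
    have hNdot : (1 / ω) * (v ⬝ᵥ (D *ᵥ v)) + v ⬝ᵥ (E *ᵥ v) = 0 := by
      have : v ⬝ᵥ (((1 / ω) • D + E) *ᵥ v) = 0 := by rw [← hN]; exact hdot
      rw [Matrix.add_mulVec, dotProduct_add, Matrix.smul_mulVec,
        dotProduct_smul] at this
      simpa [smul_eq_mul] using this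
    have hDdot : (0 : ℝ) < v ⬝ᵥ (D *ᵥ v) := by
      have := hDpd.dotProduct_mulVec_pos hv0
      simpa using this
    have hfrac : (1 : ℝ) / 2 < 1 / ω := by
      rw [div_lt_div_iff₀ (by norm_num) hω0]; linarith
    nlinarith
  refine ⟨part1, ?_⟩
  -- Build the linear equivalence from Nω
  have hdet := (Matrix.isUnit_iff_isUnit_det Nω).mp hNinv
  have hu1 : Nω * Nω⁻¹ = 1 := Matrix.mul_nonsing_inv _ hdet
  have hu2 : Nω⁻¹ * Nω = 1 := Matrix.nonsing_inv_mul _ hdet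
  let e : EuclideanSpace ℝ (Fin p₁ ⊕ Fin p₂) ≃ₗ[ℝ] EuclideanSpace ℝ (Fin p₁ ⊕ Fin p₂) :=
    LinearEquiv.ofLinear (Matrix.toEuclideanLin Nω) (Matrix.toEuclideanLin Nω⁻¹)
      (by
        apply LinearMap.ext; intro x
        simp [Matrix.toEuclideanLin_apply, Matrix.mulVec_mulVec, hu1])
      (by
        apply LinearMap.ext; intro x
        simp [Matrix.toEuclideanLin_apply, Matrix.mulVec_mulVec, hu2])
  have he : (e : EuclideanSpace ℝ (Fin p₁ ⊕ Fin p₂) →ₗ[ℝ] _) = Matrix.toEuclideanLin Nω := rfl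
  have hWmap : W = Submodule.map (e.symm : _ →ₗ[ℝ] _) Kᗮ := by
    rw [hW, ← he, Submodule.map_equiv_eq_comap_symm, LinearEquiv.symm_symm]
  have hdisj : Disjoint K W := by
    rw [Submodule.disjoint_def]
    intro x hxK hxW
    exact part1 x hxK (by rw [hW] at hxW; exact hxW)
  have hfrW : Module.finrank ℝ W = Module.finrank ℝ Kᗮ := by
    rw [hWmap]; exact (Submodule.equivMapOfInjective _ e.symm.injective Kᗮ).symm.finrank_eq
  have hfr : Module.finrank ℝ K + Module.finrank ℝ W =
      Module.finrank ℝ (EuclideanSpace ℝ (Fin p₁ ⊕ Fin p₂)) := by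
    rw [hfrW]; exact Submodule.finrank_add_finrank_orthogonal K
  refine ⟨hdisj, ?_⟩
  rw [codisjoint_iff]
  apply Submodule.eq_top_of_finrank_eq
  have := Submodule.finrank_sup_add_finrank_inf_eq K W
  rw [Submodule.finrank_eq_zero.mpr (disjoint_iff.mp hdisj)] at this
  omega
end

section
/- Young's eigenvalue relation: let H = D + E + Eᵀ be a 2×2 block matrix with invertible D, and let T_ω = I − ((1/ω)D + E)^{-1}H for ω ≠ 0. If λ ≠ 0 is an eigenvalue of T_ω, then there exists an eigenvalue μ of the Jacobi matrix J = −D^{-1}(E+Eᵀ) such that (λ + ω − 1)² = λ ω² μ². -/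
open Matrix

/-- Young's eigenvalue relation: for a 2×2 block matrix `H = D + E + Eᵀ`
with invertible `D` and `T_ω = I - ((1/ω)D + E)⁻¹H`, `ω ≠ 0`: if `λ ≠ 0` is an eigenvalue
of `T_ω`, then some eigenvalue `μ` of the Jacobi matrix `J = -D⁻¹(E+Eᵀ)` satisfies
`(λ + ω - 1)² = λ ω² μ²`. -/
theorem stmt_7 (p₁ p₂ : ℕ)
    (D₁ : Matrix (Fin p₁) (Fin p₁) ℝ) (D₂ : Matrix (Fin p₂) (Fin p₂) ℝ)
    (E₂₁ : Matrix (Fin p₂) (Fin p₁) ℝ)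
    (H D E Nω Tω J : Matrix (Fin p₁ ⊕ Fin p₂) (Fin p₁ ⊕ Fin p₂) ℝ)
    (hD : D = Matrix.fromBlocks D₁ 0 0 D₂)
    (hE : E = Matrix.fromBlocks 0 0 E₂₁ 0)
    (hH : H = D + E + Eᵀ)
    (hDinv : IsUnit D)
    (ω : ℝ) (hω : ω ≠ 0)
    (hN : Nω = (1 / ω) • D + E) (hNinv : IsUnit Nω)
    (hT : Tω = 1 - Nω⁻¹ * H)
    (hJ : J = -(D⁻¹ * (E + Eᵀ)))
    (lam : ℂ) (hlam : lam ≠ 0)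
    (x : (Fin p₁ ⊕ Fin p₂) → ℂ) (hx : x ≠ 0)
    (heig : (Tω.map Complex.ofReal) *ᵥ x = lam • x) :
    ∃ (μ : ℂ) (y : (Fin p₁ ⊕ Fin p₂) → ℂ), y ≠ 0 ∧
      (J.map Complex.ofReal) *ᵥ y = μ • y ∧
      (lam + (ω : ℂ) - 1) ^ 2 = lam * (ω : ℂ) ^ 2 * μ ^ 2 := by
  classical
  have hNd : IsUnit Nω.det := (Matrix.isUnit_iff_isUnit_det _).mp hNinv
  have hDd : IsUnit D.det := (Matrix.isUnit_iff_isUnit_det _).mp hDinv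
  set g : Matrix (Fin p₁ ⊕ Fin p₂) (Fin p₁ ⊕ Fin p₂) ℝ →+*
      Matrix (Fin p₁ ⊕ Fin p₂) (Fin p₁ ⊕ Fin p₂) ℂ := Complex.ofRealHom.mapMatrix with hg
  have hNc : g Nω * g Nω⁻¹ = 1 := by
    rw [← _root_.map_mul g, Matrix.mul_nonsing_inv _ hNd, _root_.map_one g]
  have hDc : g D⁻¹ * g D = 1 := by
    rw [← _root_.map_mul g, Matrix.nonsing_inv_mul _ hDd, _root_.map_one g]
  -- step 1: eigen equation in terms of H and Nω
  have h0 : x - g Nω⁻¹ *ᵥ (g H *ᵥ x) = lam • x := by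
    have h : g Tω *ᵥ x = lam • x := heig
    rwa [hT, _root_.map_sub g, _root_.map_one g, _root_.map_mul g, Matrix.sub_mulVec, Matrix.one_mulVec,
      ← Matrix.mulVec_mulVec] at h
  have h1 : (g H) *ᵥ x = (1 - lam) • ((g Nω) *ᵥ x) := by
    have h2 := congrArg (fun v => g Nω *ᵥ v) h0
    simp only [Matrix.mulVec_sub, Matrix.mulVec_mulVec, ← mul_assoc, hNc, one_mul,
      Matrix.mulVec_smul] at h2
    rw [sub_smul, one_smul, ← h2]
    abel
  -- step 2: key relation  c • (gD x) + lam • (gE x) + gEᵀ x = 0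
  set c : ℂ := (lam + (ω : ℂ) - 1) / (ω : ℂ) with hc
  have hωc : (ω : ℂ) ≠ 0 := Complex.ofReal_ne_zero.mpr hω
  have hgN : g Nω = ((1 : ℂ) / (ω : ℂ)) • g D + g E := by
    rw [hN, _root_.map_add g]
    congr 1
    ext i j
    simp [hg, Matrix.map_apply, Complex.ofReal_mul, div_mul_eq_mul_div, mul_comm]
  have key : c • (g D *ᵥ x) + lam • (g E *ᵥ x) + (g Eᵀ *ᵥ x) = 0 := by
    have h3 : g D *ᵥ x + g E *ᵥ x + g Eᵀ *ᵥ x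
        = (1 - lam) • (((1 : ℂ) / (ω : ℂ)) • (g D *ᵥ x) + g E *ᵥ x) := by
      have := h1
      rw [hH, _root_.map_add g, _root_.map_add g, Matrix.add_mulVec, Matrix.add_mulVec, hgN,
        Matrix.add_mulVec, Matrix.smul_mulVec] at this
      exact this
    have hcc : c = 1 - (1 - lam) * ((1:ℂ)/(ω:ℂ)) := by
      field_simp [hc]
      rw [hc, div_mul_cancel₀ _ hωc]
      ring
    funext i
    have h4 := congrFun h3 i
    simp only [Pi.add_apply, Pi.smul_apply, smul_eq_mul, Pi.zero_apply] at h4 ⊢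
    rw [hcc]
    ring_nf
    ring_nf at h4
    linear_combination h4
  -- block form of the matrices
  set D₁' := D₁.map Complex.ofReal with hD₁'
  set D₂' := D₂.map Complex.ofReal with hD₂'
  set B := E₂₁.map Complex.ofReal with hB
  have hgD : g D = fromBlocks D₁' 0 0 D₂' := by
    rw [hD]
    show (fromBlocks D₁ 0 0 D₂).map Complex.ofReal = _
    simp [Matrix.fromBlocks_map, Matrix.map_zero _ Complex.ofReal_zero, hD₁', hD₂']
  have hgE : g E = fromBlocks 0 0 B 0 := by
    rw [hE]
    show (fromBlocks 0 0 E₂₁ 0).map Complex.ofReal = _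
    simp [Matrix.fromBlocks_map, Matrix.map_zero _ Complex.ofReal_zero, hB]
  have hgEt : g Eᵀ = fromBlocks 0 Bᵀ 0 0 := by
    rw [hE, Matrix.fromBlocks_transpose]
    show (fromBlocks 0ᵀ E₂₁ᵀ 0ᵀ 0ᵀ).map Complex.ofReal = _
    simp [Matrix.fromBlocks_map, Matrix.map_zero _ Complex.ofReal_zero, hB,
      Matrix.transpose_map]
  set x₁ : Fin p₁ → ℂ := x ∘ Sum.inl with hx₁
  set x₂ : Fin p₂ → ℂ := x ∘ Sum.inr with hx₂
  have hxe : x = Sum.elim x₁ x₂ := by funext i; cases i <;> rfl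
  rw [hgD, hgE, hgEt, hxe, Matrix.fromBlocks_mulVec, Matrix.fromBlocks_mulVec,
    Matrix.fromBlocks_mulVec] at key
  simp only [Matrix.zero_mulVec, add_zero, zero_add, Sum.elim_comp_inl, Sum.elim_comp_inr] at key
  -- the two block equations
  have key1 : ∀ i, (Bᵀ *ᵥ x₂) i = -c * ((D₁' *ᵥ x₁) i) := by
    intro i
    have h4 := congrFun key (Sum.inl i)
    simp only [Pi.add_apply, Pi.smul_apply, Sum.elim_inl, smul_eq_mul, Pi.zero_apply,
      mul_zero] at h4
    linear_combination h4
  have key2 : ∀ i, lam * ((B *ᵥ x₁) i) = -c * ((D₂' *ᵥ x₂) i) := by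
    intro i
    have h4 := congrFun key (Sum.inr i)
    simp only [Pi.add_apply, Pi.smul_apply, Sum.elim_inr, smul_eq_mul, Pi.zero_apply,
      mul_zero] at h4
    linear_combination h4
  -- square root of lam
  obtain ⟨s, hs⟩ := IsAlgClosed.exists_pow_nat_eq lam (n := 2) (by norm_num)
  have hs0 : s ≠ 0 := by
    intro h
    apply hlam
    rw [← hs, h]
    ring
  refine ⟨c / s, Sum.elim x₁ (s⁻¹ • x₂), ?_, ?_, ?_⟩
  · -- nonzero
    intro hy0
    apply hx
    funext i
    cases i with
    | inl i =>
        have := congrFun hy0 (Sum.inl i)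
        simpa [hx₁] using this
    | inr i =>
        have := congrFun hy0 (Sum.inr i)
        simp only [Sum.elim_inr, Pi.smul_apply, smul_eq_mul, Pi.zero_apply] at this
        have := (mul_eq_zero.mp this).resolve_left (inv_ne_zero hs0)
        simpa [hx₂] using this
  · -- Jacobi eigenvector
    have hgJ : g J = -(g D⁻¹ * (g E + g Eᵀ)) := by
      rw [hJ, _root_.map_neg g, _root_.map_mul g, _root_.map_add g]
    have clm : (g E + g Eᵀ) *ᵥ (Sum.elim x₁ (s⁻¹ • x₂))
        = (-(c / s)) • (g D *ᵥ (Sum.elim x₁ (s⁻¹ • x₂))) := by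
      rw [hgE, hgEt, hgD]
      funext i
      cases i with
      | inl i =>
          have h5 := key1 i
          simp only [Matrix.add_mulVec, Matrix.fromBlocks_mulVec, Matrix.zero_mulVec,
            add_zero, zero_add, Sum.elim_comp_inl, Sum.elim_comp_inr, Matrix.mulVec_smul,
            Pi.add_apply, Sum.elim_inl, Pi.smul_apply, smul_eq_mul, Pi.zero_apply, mul_zero]
          rw [h5]
          field_simp
      | inr i =>
          have h5 := key2 i
          simp only [Matrix.add_mulVec, Matrix.fromBlocks_mulVec, Matrix.zero_mulVec,
            add_zero, zero_add, Sum.elim_comp_inl, Sum.elim_comp_inr, Matrix.mulVec_smul,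
            Pi.add_apply, Sum.elim_inr, Pi.smul_apply, smul_eq_mul, Pi.zero_apply, mul_zero]
          have h6 : (B *ᵥ x₁) i = -c / lam * ((D₂' *ᵥ x₂) i) := by
            rw [div_mul_eq_mul_div, eq_div_iff hlam]
            linear_combination h5
          rw [h6, ← hs]
          ring
    show g J *ᵥ _ = _
    rw [hgJ, Matrix.neg_mulVec, ← Matrix.mulVec_mulVec, clm, Matrix.mulVec_smul,
      Matrix.mulVec_mulVec, hDc, Matrix.one_mulVec]
    rw [neg_smul, neg_neg]
  · -- the scalar identity
    rw [div_pow, hs, hc, div_pow]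
    field_simp
end

section
/- For 0 < ω < 2 and 0 ≤ β < 1, define g(ω) = 1 − ω + (1/2)ω²β² + ωβ√(1 − ω + (1/4)ω²β²) for ω ≤ ω_opt and g(ω) = ω − 1 for ω ≥ ω_opt, where ω_opt = 2/(1 + √(1−β²)). Then g is minimized over (0,2) at ω = ω_opt, with minimal value ω_opt − 1 = (1 − √(1−β²))/(1 + √(1−β²)). -/
/-- For `0 ≤ β < 1`, the SOR rate function
`g(ω) = 1 - ω + ω²β²/2 + ωβ√(1 - ω + ω²β²/4)` for `ω ≤ ω_opt`, `g(ω) = ω - 1` for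
`ω ≥ ω_opt`, with `ω_opt = 2/(1 + √(1-β²))`, is minimized over `(0,2)` at `ω_opt`, with
minimal value `ω_opt - 1 = (1 - √(1-β²))/(1 + √(1-β²))`. -/
theorem stmt_9 (β : ℝ) (hβ : 0 ≤ β ∧ β < 1)
    (ωopt : ℝ) (hωopt : ωopt = 2 / (1 + Real.sqrt (1 - β ^ 2)))
    (g : ℝ → ℝ)
    (hg : g = fun ω => if ω ≤ ωopt then
        1 - ω + ω ^ 2 * β ^ 2 / 2 + ω * β * Real.sqrt (1 - ω + ω ^ 2 * β ^ 2 / 4)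
      else ω - 1) :
    (∀ ω, 0 < ω → ω < 2 → g ωopt ≤ g ω) ∧
      g ωopt = ωopt - 1 ∧
      ωopt - 1 = (1 - Real.sqrt (1 - β ^ 2)) / (1 + Real.sqrt (1 - β ^ 2)) := by
  obtain ⟨hβ0, hβ1⟩ := hβ
  set s := Real.sqrt (1 - β ^ 2) with hs
  have h1β : 0 < 1 - β ^ 2 := by nlinarith
  have hs0 : 0 < s := Real.sqrt_pos.mpr h1β
  have hs2 : s ^ 2 = 1 - β ^ 2 := Real.sq_sqrt h1β.le
  have hb2 : β ^ 2 = 1 - s ^ 2 := by linarith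
  have hs1 : s ≤ 1 := by nlinarith
  have h1s : 0 < 1 + s := by linarith
  have hω2 : ωopt * (1 + s) = 2 := by rw [hωopt]; field_simp
  have hω1 : 1 ≤ ωopt := by nlinarith
  have hωlt2 : ωopt < 2 := by nlinarith
  have hD0 : 1 - ωopt + ωopt ^ 2 * β ^ 2 / 4 = 0 := by
    rw [hωopt, hb2]; field_simp; ring
  have hgopt : g ωopt = ωopt - 1 := by
    rw [hg]
    simp only [le_refl, if_pos]
    rw [hD0, Real.sqrt_zero, mul_zero, add_zero]
    nlinarith [hD0]
  refine ⟨?_, hgopt, ?_⟩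
  · intro ω hω0 hωlt
    rw [hgopt, hg]
    by_cases hle : ω ≤ ωopt
    · simp only [if_pos hle]
      set D := 1 - ω + ω ^ 2 * β ^ 2 / 4 with hD
      have keyD : D - ((ωopt - ω) * β / 2) ^ 2 = s * (ωopt - ω) := by
        rw [hD]
        linear_combination ((2 * ωopt * ω - ωopt ^ 2) / 4) * hb2 +
          (ω * (1 - s) / 2 - ωopt * (1 - s) / 4 - 1 / 2) * hω2
      have hsub : 0 ≤ ωopt - ω := by linarith
      have hDpos : ((ωopt - ω) * β / 2) ^ 2 ≤ D := by
        nlinarith [mul_nonneg hs0.le hsub]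
      have hnn : 0 ≤ (ωopt - ω) * β / 2 :=
        div_nonneg (mul_nonneg hsub hβ0) (by norm_num)
      have hkey : (ωopt - ω) * β / 2 ≤ Real.sqrt D := by
        have h := Real.sqrt_le_sqrt hDpos
        rwa [Real.sqrt_sq hnn] at h
      have h1 : ω * β * ((ωopt - ω) * β / 2) ≤ ω * β * Real.sqrt D :=
        mul_le_mul_of_nonneg_left hkey (mul_nonneg hω0.le hβ0)
      have key2 : 1 - ω + ω ^ 2 * β ^ 2 / 2 + ω * β * ((ωopt - ω) * β / 2) - (ωopt - 1)
          = s * (ωopt - ω) := by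
        linear_combination (ω * ωopt / 2) * hb2 + (ω * (1 - s) / 2 - 1) * hω2
      nlinarith [mul_nonneg hs0.le hsub]
    · simp only [if_neg hle]
      push_neg at hle
      linarith
  · rw [hωopt]
    field_simp
    ring
end

section
/- If U₀ ∈ ℝ^{m×k} and V₀ ∈ ℝ^{n×k} have full column rank k, then the derivative of the bilinear map τ(U,V) = UVᵀ at (U₀,V₀), given by τ'(U₀,V₀)[(δU, δV)] = δU V₀ᵀ + U₀ δVᵀ, has rank mk + nk − k², and its kernel is exactly the orbit tangent space {(U₀B, −V₀Bᵀ) : B ∈ ℝ^{k×k}}. -/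
open Matrix

/-- The orbit tangent map `B ↦ (U₀B, -V₀Bᵀ)` as a linear map. -/
noncomputable def orbitMap (m n k : ℕ) (U₀ : Matrix (Fin m) (Fin k) ℝ)
    (V₀ : Matrix (Fin n) (Fin k) ℝ) :
    Matrix (Fin k) (Fin k) ℝ →ₗ[ℝ] Matrix (Fin m) (Fin k) ℝ × Matrix (Fin n) (Fin k) ℝ where
  toFun B := (U₀ * B, -(V₀ * Bᵀ))
  map_add' B C := by
    simp [Matrix.mul_add, Matrix.transpose_add, Prod.ext_iff, neg_add, Prod.add_def, add_comm]
  map_smul' c B := by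
    simp [Matrix.mul_smul, Matrix.transpose_smul, Prod.ext_iff, Prod.smul_mk]

/-- The derivative `τ'(U₀,V₀)[(δU,δV)] = δU V₀ᵀ + U₀ δVᵀ` of `τ(U,V) = UVᵀ` as a
linear map. -/
noncomputable def tauDeriv (m n k : ℕ) (U₀ : Matrix (Fin m) (Fin k) ℝ)
    (V₀ : Matrix (Fin n) (Fin k) ℝ) :
    Matrix (Fin m) (Fin k) ℝ × Matrix (Fin n) (Fin k) ℝ →ₗ[ℝ] Matrix (Fin m) (Fin n) ℝ where
  toFun p := p.1 * V₀ᵀ + U₀ * p.2ᵀ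
  map_add' p q := by
    simp [Prod.add_def, Matrix.add_mul, Matrix.mul_add, Matrix.transpose_add]
    abel
  map_smul' c p := by
    simp [Prod.smul_fst, Prod.smul_snd, Matrix.smul_mul, Matrix.mul_smul,
      Matrix.transpose_smul, smul_add]

lemma mulVec_inj_of_rank {m k : ℕ} (A : Matrix (Fin m) (Fin k) ℝ) (hA : A.rank = k) :
    ∀ v : Fin k → ℝ, A *ᵥ v = 0 → v = 0 := by
  have hrn := LinearMap.finrank_range_add_finrank_ker A.mulVecLin
  have hdom : Module.finrank ℝ (Fin k → ℝ) = k := by simp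
  have hker : Module.finrank ℝ (LinearMap.ker A.mulVecLin) = 0 := by
    have : A.rank + Module.finrank ℝ (LinearMap.ker A.mulVecLin) = k := by
      rw [Matrix.rank] at *; omega
    omega
  have hbot : LinearMap.ker A.mulVecLin = ⊥ := Submodule.finrank_eq_zero.mp hker
  exact Matrix.ker_mulVecLin_eq_bot_iff.mp hbot

lemma mul_cancel_of_rank {m k p : ℕ} (A : Matrix (Fin m) (Fin k) ℝ) (hA : A.rank = k)
    (X : Matrix (Fin k) (Fin p) ℝ) (h : A * X = 0) : X = 0 := by
  ext i j
  have hcol : A *ᵥ (fun l => X l j) = 0 := by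
    funext r
    have := congrFun (congrFun h r) j
    simpa [Matrix.mulVec, Matrix.mul_apply, dotProduct] using this
  have := congrFun (mulVec_inj_of_rank A hA _ hcol) i
  simpa using this

lemma ker_sol {m n k : ℕ}
    (U₀ : Matrix (Fin m) (Fin k) ℝ) (V₀ : Matrix (Fin n) (Fin k) ℝ)
    (hU : U₀.rank = k) (hV : V₀.rank = k) (δU : Matrix (Fin m) (Fin k) ℝ)
    (δV : Matrix (Fin n) (Fin k) ℝ) (h : δU * V₀ᵀ + U₀ * δVᵀ = 0) :
    ∃ B : Matrix (Fin k) (Fin k) ℝ, δU = U₀ * B ∧ δV = -(V₀ * Bᵀ) := by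
  set G := V₀ᵀ * V₀ with hG
  have hGrank : G.rank = k := by rw [hG, Matrix.rank_transpose_mul_self, hV]
  have hGunit : IsUnit G := by
    rw [← Matrix.mulVec_injective_iff_isUnit]
    intro x y hxy
    have h0 : G *ᵥ (x - y) = 0 := by rw [Matrix.mulVec_sub, hxy, sub_self]
    exact sub_eq_zero.mp (mulVec_inj_of_rank G hGrank _ h0)
  have hGdet : IsUnit G.det := (Matrix.isUnit_iff_isUnit_det G).mp hGunit
  set B : Matrix (Fin k) (Fin k) ℝ := -(δVᵀ * V₀ * G⁻¹) with hB
  have h1 : δU * V₀ᵀ = -(U₀ * δVᵀ) := by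
    rw [← add_eq_zero_iff_eq_neg] at *; exact h
  have hδU : δU = U₀ * B := by
    have h2 : δU * G = -(U₀ * (δVᵀ * V₀)) := by
      rw [hG, ← Matrix.mul_assoc, h1, Matrix.neg_mul, Matrix.mul_assoc]
    have := congrArg (· * G⁻¹) h2
    simpa [Matrix.mul_assoc, Matrix.mul_nonsing_inv G hGdet, hB,
      Matrix.mul_neg, Matrix.neg_mul] using this
  have h3 : U₀ * (B * V₀ᵀ + δVᵀ) = 0 := by
    rw [Matrix.mul_add, ← Matrix.mul_assoc, ← hδU, h1]
    simp
  have h4 : B * V₀ᵀ + δVᵀ = 0 := mul_cancel_of_rank U₀ hU _ h3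
  have hδV : δV = -(V₀ * Bᵀ) := by
    have : δVᵀ = -(B * V₀ᵀ) := by
      rw [eq_neg_iff_add_eq_zero]; rw [add_comm] at h4; exact h4
    have := congrArg Matrix.transpose this
    simpa [Matrix.transpose_mul] using this
  exact ⟨B, hδU, hδV⟩


/-- if `U₀`, `V₀` have full column rank `k`, then `τ'(U₀,V₀)` has rank
`mk + nk - k²` and its kernel is exactly the orbit tangent space
`{(U₀B, -V₀Bᵀ) : B ∈ ℝ^{k×k}}`. -/
theorem stmt_16 (m n k : ℕ)
    (U₀ : Matrix (Fin m) (Fin k) ℝ) (V₀ : Matrix (Fin n) (Fin k) ℝ)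
    (hU : U₀.rank = k) (hV : V₀.rank = k) :
    Module.finrank ℝ (LinearMap.range (tauDeriv m n k U₀ V₀)) = m * k + n * k - k ^ 2 ∧
      LinearMap.ker (tauDeriv m n k U₀ V₀) = LinearMap.range (orbitMap m n k U₀ V₀) := by
  have hker : LinearMap.ker (tauDeriv m n k U₀ V₀) = LinearMap.range (orbitMap m n k U₀ V₀) := by
    ext p
    simp only [LinearMap.mem_ker, LinearMap.mem_range]
    constructor
    · intro hp
      have h0 : p.1 * V₀ᵀ + U₀ * p.2ᵀ = 0 := hp
      obtain ⟨B, h1, h2⟩ := ker_sol U₀ V₀ hU hV p.1 p.2 h0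
      exact ⟨B, by simp [orbitMap, ← h1, ← h2]⟩
    · rintro ⟨B, rfl⟩
      show U₀ * B * V₀ᵀ + U₀ * (-(V₀ * Bᵀ))ᵀ = 0
      simp [Matrix.transpose_mul, Matrix.mul_neg, Matrix.mul_assoc]
  refine ⟨?_, hker⟩
  have hinj : Function.Injective (orbitMap m n k U₀ V₀) := by
    rw [← LinearMap.ker_eq_bot]
    apply (Submodule.eq_bot_iff _).mpr
    intro B hB
    simp only [LinearMap.mem_ker] at hB
    have h1 : U₀ * B = 0 := congrArg Prod.fst hB
    exact mul_cancel_of_rank U₀ hU B h1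
  have hkerdim : Module.finrank ℝ (LinearMap.ker (tauDeriv m n k U₀ V₀)) = k ^ 2 := by
    rw [hker, LinearMap.finrank_range_of_inj hinj]
    simp [Module.finrank_matrix, pow_two]
  have hrn := LinearMap.finrank_range_add_finrank_ker (tauDeriv m n k U₀ V₀)
  have hdom : Module.finrank ℝ
      (Matrix (Fin m) (Fin k) ℝ × Matrix (Fin n) (Fin k) ℝ) = m * k + n * k := by
    simp [Module.finrank_prod, Module.finrank_matrix]
  have hk2 : k ^ 2 ≤ m * k := by
    have : k ≤ m := hU ▸ (Matrix.rank_le_height U₀)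
    nlinarith
  omega
end
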